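/- Let β = (1+√5)/2, T_β(x) = βx mod 1, and let X be a random variable on [0,1) whose CDF F has no jumps at the endpoints of the intervals I_{n,J}, J ∈ Ω_n. Then for x ∈ [0, β^{−1}), the CDF F_n of T_β^n(X) satisfies F_n(x) = ∑_{J ∈ Ω_n} [F(L_{n,J} + x β^{−n}) − F(L_{n,J})]. -/

import Mathlib

open MeasureTheory Real Filter

/-- The golden ratio. -/
noncomputable def gr : ℝ := (1 + Real.sqrt 5) / 2

/-- Binary strings of length `n` with no two consecutive ones. -/
def Omega (n : ℕ) : Finset (Fin n → Fin 2) :=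
  Finset.univ.filter fun J =>
    ∀ k : Fin n, ∀ h : k.val + 1 < n, (J k : ℕ) * (J ⟨k.val + 1, h⟩ : ℕ) = 0

/-- `L (j_1,…,j_n) = ∑ j_k β^{-k}`. -/
noncomputable def L {n : ℕ} (J : Fin n → Fin 2) : ℝ :=
  ∑ k : Fin n, ((J k : ℕ) : ℝ) * gr ^ (-(k.val + 1 : ℤ))

/-- The last digit `j_n` of a string. -/
def lastD {n : ℕ} (J : Fin n → Fin 2) : ℕ :=
  if h : 0 < n then (J ⟨n - 1, Nat.sub_lt h one_pos⟩ : ℕ) else 0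

/-- The length of `I_{n,J}`. -/
noncomputable def Ilen {n : ℕ} (J : Fin n → Fin 2) : ℝ :=
  (lastD J : ℝ) * gr ^ (-(n + 1 : ℤ)) + (1 - (lastD J : ℝ)) * gr ^ (-(n : ℤ))

/-- The interval `I_{n,J}`. -/
noncomputable def Ival {n : ℕ} (J : Fin n → Fin 2) : Set ℝ :=
  Set.Ico (L J) (L J + Ilen J)

/-- The base-β transformation (β = golden ratio). -/
noncomputable def T (x : ℝ) : ℝ := gr * x - ⌊gr * x⌋

/-- The invariant density. -/
noncomputable def fGold (x : ℝ) : ℝ :=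
  if x < gr⁻¹ then (1 + gr) / Real.sqrt 5 else gr / Real.sqrt 5

/-- The pdf of `T^n X` when `X` has pdf `f`. -/
noncomputable def evolve (n : ℕ) (f : ℝ → ℝ) (x : ℝ) : ℝ :=
  if x < gr⁻¹ then ∑ J ∈ Omega n, gr ^ (-(n : ℤ)) * f (L J + x * gr ^ (-(n : ℤ)))
  else ∑ J ∈ (Omega n).filter (fun J => lastD J = 0),
    gr ^ (-(n : ℤ)) * f (L J + x * gr ^ (-(n : ℤ)))

/-! The intervals `I_{n,J}`, `J ∈ Ω_n`, are the cylinders of the golden-mean shift and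
partition `[0,1)`: passing from `n` to `n + 1`, the interval `I_{n,J}` splits at
`L J + β^{-(n+1)}` into `I_{n+1,J0}` and `I_{n+1,J1}`, the second piece existing only when
`j_n = 0`, because `β^{-n} = β^{-(n+1)} + β^{-(n+2)}`. On each cylinder `T^n y = β^n (y - L J)`,
so for `x < β⁻¹` the event `T^n X ≤ x` is the disjoint union over `J` of the events
`X ∈ [L J, L J + x β^{-n}]`, whose intervals lie inside the cylinders; as `X` has no atom at
`L J`, each has probability `F(L J + x β^{-n}) - F(L J)`. -/

open Set
open scoped goldenRatio

lemma gr_eq_goldenRatio : gr = φ := rfl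

lemma gr_pos : 0 < gr := goldenRatio_pos

lemma gr_ne_zero : gr ≠ 0 := goldenRatio_ne_zero

lemma gr_lt_two : gr < 2 := goldenRatio_lt_two

lemma gr_inv_add_inv_sq : gr⁻¹ + gr⁻¹ ^ 2 = 1 := by
  have h : gr⁻¹ = gr - 1 := by
    rw [gr_eq_goldenRatio, inv_goldenRatio, ← one_sub_goldenRatio]; ring
  rw [h, gr_eq_goldenRatio]
  linear_combination goldenRatio_sq

lemma gr_zpow_neg_eq_add (n : ℕ) :
    gr ^ (-(n : ℤ)) = gr ^ (-(n + 1 : ℤ)) + gr ^ (-(n + 2 : ℤ)) := by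
  have h : gr ^ (2 : ℤ) = gr + 1 := by
    rw [zpow_ofNat, gr_eq_goldenRatio, goldenRatio_sq]
  rw [show -(n : ℤ) = -(n + 2 : ℤ) + 2 by ring, show -(n + 1 : ℤ) = -(n + 2 : ℤ) + 1 by ring,
    zpow_add₀ gr_ne_zero, zpow_add_one₀ gr_ne_zero, h]
  ring

lemma T_of_mem_Ico_zero_inv {u : ℝ} (hu : u ∈ Ico 0 gr⁻¹) : T u = gr * u := by
  have hlt : gr * u < gr * gr⁻¹ := mul_lt_mul_of_pos_left hu.2 gr_pos
  rw [mul_inv_cancel₀ gr_ne_zero] at hlt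
  have hfloor : ⌊gr * u⌋ = 0 :=
    Int.floor_eq_zero_iff.2 ⟨mul_nonneg gr_pos.le hu.1, hlt⟩
  rw [T, hfloor, Int.cast_zero, sub_zero]

lemma T_of_mem_Ico_inv_one {u : ℝ} (hu : u ∈ Ico gr⁻¹ 1) : T u = gr * u - 1 := by
  have hle : gr * gr⁻¹ ≤ gr * u := mul_le_mul_of_nonneg_left hu.1 gr_pos.le
  rw [mul_inv_cancel₀ gr_ne_zero] at hle
  have hlt : gr * u < 2 := by
    linarith [mul_lt_mul_of_pos_left hu.2 gr_pos, gr_lt_two]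
  have hfloor : ⌊gr * u⌋ = 1 := Int.floor_eq_iff.2 ⟨by simpa using hle, by norm_num; linarith⟩
  rw [T, hfloor, Int.cast_one]

lemma mem_Omega_succ {n : ℕ} {J : Fin (n + 1) → Fin 2} :
    J ∈ Omega (n + 1) ↔ ∀ k : Fin n, (J k.castSucc : ℕ) * J k.succ = 0 := by
  simp only [Omega, Finset.mem_filter, Finset.mem_univ, true_and]
  refine ⟨fun h k => h k.castSucc (by simp), fun h k hk => h ⟨k, by omega⟩⟩

lemma lastD_succ {n : ℕ} (J : Fin (n + 1) → Fin 2) : lastD J = J (Fin.last n) := by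
  simp [lastD, Fin.last]

lemma snoc_mem_Omega_iff {n : ℕ} {J : Fin n → Fin 2} {j : Fin 2} :
    Fin.snoc J j ∈ Omega (n + 1) ↔ J ∈ Omega n ∧ lastD J * j = 0 := by
  cases n with
  | zero =>
    refine iff_of_true ?_ ⟨?_, by simp [lastD]⟩ <;>
      simp only [Omega, Finset.mem_filter, Finset.mem_univ, true_and]
    · exact fun k hk => absurd hk (by omega)
    · exact fun k => k.elim0
  | succ n =>
    simp only [mem_Omega_succ, Fin.forall_fin_succ' (n := n), lastD_succ, Fin.succ_castSucc,
      Fin.snoc_castSucc, Fin.succ_last, Fin.snoc_last]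

lemma lastD_eq_zero_or_one {n : ℕ} (J : Fin n → Fin 2) : lastD J = 0 ∨ lastD J = 1 := by
  unfold lastD
  split <;> omega

lemma L_snoc {n : ℕ} (J : Fin n → Fin 2) (j : Fin 2) :
    L (Fin.snoc J j) = L J + (j : ℕ) * gr ^ (-(n + 1 : ℤ)) := by
  simp [L, Fin.sum_univ_castSucc]

lemma Ilen_of_lastD_eq_zero {n : ℕ} {J : Fin n → Fin 2} (h : lastD J = 0) :
    Ilen J = gr ^ (-(n : ℤ)) := by
  simp [Ilen, h]

lemma Ilen_of_lastD_eq_one {n : ℕ} {J : Fin n → Fin 2} (h : lastD J = 1) :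
    Ilen J = gr ^ (-(n + 1 : ℤ)) := by
  simp [Ilen, h]

lemma gr_zpow_neg_succ_le_Ilen {n : ℕ} (J : Fin n → Fin 2) : gr ^ (-(n + 1 : ℤ)) ≤ Ilen J := by
  rcases lastD_eq_zero_or_one J with h | h
  · rw [Ilen_of_lastD_eq_zero h, gr_zpow_neg_eq_add]
    linarith [zpow_pos gr_pos (-(n + 2 : ℤ))]
  · rw [Ilen_of_lastD_eq_one h]

lemma Ival_snoc_zero {n : ℕ} (J : Fin n → Fin 2) :
    Ival (Fin.snoc J 0) = Ico (L J) (L J + gr ^ (-(n + 1 : ℤ))) := by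
  rw [Ival, L_snoc, Ilen_of_lastD_eq_zero (by simp [lastD_succ])]
  norm_num

lemma Ival_snoc_one {n : ℕ} (J : Fin n → Fin 2) :
    Ival (Fin.snoc J 1) =
      Ico (L J + gr ^ (-(n + 1 : ℤ))) (L J + gr ^ (-(n + 1 : ℤ)) + gr ^ (-(n + 2 : ℤ))) := by
  rw [Ival, L_snoc, Ilen_of_lastD_eq_one (by simp [lastD_succ])]
  norm_num
  ring_nf

lemma Ival_snoc_subset {n : ℕ} {J : Fin n → Fin 2} {j : Fin 2} (h : lastD J * j = 0) :
    Ival (Fin.snoc J j) ⊆ Ival J := by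
  match j, h with
  | 0, _ =>
    rw [Ival_snoc_zero]
    exact Ico_subset_Ico le_rfl (by linarith [gr_zpow_neg_succ_le_Ilen J])
  | 1, h =>
    have h0 : lastD J = 0 := by simpa using h
    rw [Ival_snoc_one, Ival, Ilen_of_lastD_eq_zero h0, gr_zpow_neg_eq_add]
    exact Ico_subset_Ico (by linarith [zpow_pos gr_pos (-(n + 1 : ℤ))]) (by linarith)

lemma exists_snoc_mem_Ival {n : ℕ} {J : Fin n → Fin 2} {y : ℝ} (hy : y ∈ Ival J) :
    ∃ j : Fin 2, lastD J * j = 0 ∧ y ∈ Ival (Fin.snoc J j) := by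
  by_cases hlt : y < L J + gr ^ (-(n + 1 : ℤ))
  · exact ⟨0, by simp, by rw [Ival_snoc_zero]; exact ⟨hy.1, hlt⟩⟩
  · have h0 : lastD J = 0 := by
      rcases lastD_eq_zero_or_one J with h | h
      · exact h
      · exact absurd (Ilen_of_lastD_eq_one h ▸ hy.2) hlt
    have hy₂ := hy.2
    rw [Ilen_of_lastD_eq_zero h0, gr_zpow_neg_eq_add] at hy₂
    refine ⟨1, by simp [h0], ?_⟩
    rw [Ival_snoc_one]
    exact ⟨not_lt.1 hlt, by linarith⟩

lemma disjoint_Ival_snoc_zero_one {n : ℕ} (J : Fin n → Fin 2) :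
    Disjoint (Ival (Fin.snoc J 0)) (Ival (Fin.snoc J 1)) := by
  rw [Ival_snoc_zero, Ival_snoc_one]
  exact Ico_disjoint_Ico_same

lemma exists_mem_Omega_mem_Ival (n : ℕ) {y : ℝ} (hy : y ∈ Ico (0 : ℝ) 1) :
    ∃ J ∈ Omega n, y ∈ Ival J := by
  induction n with
  | zero =>
    exact ⟨default, Finset.mem_filter.2 ⟨Finset.mem_univ _, fun k => k.elim0⟩,
      by simpa [Ival, L, Ilen, lastD] using hy⟩
  | succ n ih =>
    obtain ⟨J, hJ, hyJ⟩ := ih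
    obtain ⟨j, hj, hy⟩ := exists_snoc_mem_Ival hyJ
    exact ⟨_, snoc_mem_Omega_iff.2 ⟨hJ, hj⟩, hy⟩

lemma pairwiseDisjoint_Ival (n : ℕ) :
    (Omega n : Set (Fin n → Fin 2)).PairwiseDisjoint Ival := by
  induction n with
  | zero => exact fun J _ J' _ hne => absurd (Subsingleton.elim J J') hne
  | succ n ih =>
    intro J hJ J' hJ' hne
    induction J using Fin.snocCases with | snoc J j => ?_
    induction J' using Fin.snocCases with | snoc J' j' => ?_
    obtain ⟨hJ, hj⟩ := snoc_mem_Omega_iff.1 hJ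
    obtain ⟨hJ', hj'⟩ := snoc_mem_Omega_iff.1 hJ'
    by_cases hJJ' : J = J'
    · subst hJJ'
      fin_cases j <;> fin_cases j'
      · exact absurd rfl hne
      · exact disjoint_Ival_snoc_zero_one J
      · exact (disjoint_Ival_snoc_zero_one J).symm
      · exact absurd rfl hne
    · exact (ih hJ hJ' hJJ').mono (Ival_snoc_subset hj) (Ival_snoc_subset hj')

lemma T_zpow_mul_sub_L_snoc {n : ℕ} {J : Fin n → Fin 2} {j : Fin 2} {y : ℝ}
    (hy : y ∈ Ival (Fin.snoc J j)) :
    T (gr ^ (n : ℤ) * (y - L J)) = gr ^ ((n + 1 : ℕ) : ℤ) * (y - L (Fin.snoc J j)) := by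
  have hpos : 0 < gr ^ (n : ℤ) := zpow_pos gr_pos n
  have hsucc : gr ^ ((n + 1 : ℕ) : ℤ) = gr * gr ^ (n : ℤ) := by
    rw [Nat.cast_succ, zpow_add_one₀ gr_ne_zero, mul_comm]
  have hinv : gr ^ (n : ℤ) * gr ^ (-(n + 1 : ℤ)) = gr⁻¹ := by
    rw [← zpow_add₀ gr_ne_zero, show (n : ℤ) + -(n + 1) = -1 by ring, zpow_neg_one]
  have hinv_sq : gr ^ (n : ℤ) * gr ^ (-(n + 2 : ℤ)) = gr⁻¹ ^ 2 := by
    rw [← zpow_add₀ gr_ne_zero, show (n : ℤ) + -(n + 2) = -2 by ring, zpow_neg, inv_pow,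
      zpow_ofNat]
  rw [L_snoc, hsucc]
  match j, hy with
  | 0, hy =>
    rw [Ival_snoc_zero] at hy
    rw [T_of_mem_Ico_zero_inv ⟨by nlinarith [hy.1], by nlinarith [hy.2]⟩]
    simp only [Fin.val_zero, Nat.cast_zero, zero_mul, add_zero]
    ring
  | 1, hy =>
    rw [Ival_snoc_one] at hy
    rw [T_of_mem_Ico_inv_one ⟨by nlinarith [hy.1], by nlinarith [hy.2, gr_inv_add_inv_sq]⟩]
    simp only [Fin.val_one, Nat.cast_one, one_mul]
    linear_combination gr * hinv + mul_inv_cancel₀ gr_ne_zero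

lemma T_iterate_of_mem_Ival {n : ℕ} {J : Fin n → Fin 2} (hJ : J ∈ Omega n) {y : ℝ}
    (hy : y ∈ Ival J) : T^[n] y = gr ^ (n : ℤ) * (y - L J) := by
  induction n with
  | zero => simp [L]
  | succ n ih =>
    induction J using Fin.snocCases with | snoc J j => ?_
    obtain ⟨hJ, hj⟩ := snoc_mem_Omega_iff.1 hJ
    rw [Function.iterate_succ_apply', ih hJ (Ival_snoc_subset hj hy), T_zpow_mul_sub_L_snoc hy]

lemma T_iterate_le_iff {n : ℕ} {J : Fin n → Fin 2} (hJ : J ∈ Omega n) {y : ℝ}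
    (hy : y ∈ Ival J) (x : ℝ) : T^[n] y ≤ x ↔ y ≤ L J + x * gr ^ (-(n : ℤ)) := by
  rw [T_iterate_of_mem_Ival hJ hy, zpow_neg, ← div_eq_mul_inv, ← sub_le_iff_le_add',
    le_div_iff₀ (zpow_pos gr_pos _), mul_comm]

lemma Icc_subset_Ival {n : ℕ} (J : Fin n → Fin 2) {x : ℝ} (hx : x < gr⁻¹) :
    Icc (L J) (L J + x * gr ^ (-(n : ℤ))) ⊆ Ival J := by
  have hlt : x * gr ^ (-(n : ℤ)) < gr ^ (-(n + 1 : ℤ)) := by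
    rw [neg_add, zpow_add₀ gr_ne_zero, zpow_neg_one, mul_comm (gr ^ _)]
    exact mul_lt_mul_of_pos_right hx (zpow_pos gr_pos _)
  exact Icc_subset_Ico_right (by linarith [gr_zpow_neg_succ_le_Ilen J])

lemma T_iterate_le_iff_exists (n : ℕ) {y x : ℝ} (hy : y ∈ Ico (0 : ℝ) 1) (hx : x < gr⁻¹) :
    T^[n] y ≤ x ↔ ∃ J ∈ Omega n, y ∈ Icc (L J) (L J + x * gr ^ (-(n : ℤ))) := by
  constructor
  · intro hle
    obtain ⟨J, hJ, hyJ⟩ := exists_mem_Omega_mem_Ival n hy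
    exact ⟨J, hJ, hyJ.1, (T_iterate_le_iff hJ hyJ x).1 hle⟩
  · rintro ⟨J, hJ, hyJ⟩
    exact (T_iterate_le_iff hJ (Icc_subset_Ival J hx hyJ) x).2 hyJ.2

lemma measureReal_preimage_Icc {Ω : Type*} [MeasurableSpace Ω] {μ : Measure Ω}
    [IsFiniteMeasure μ] {X : Ω → ℝ} (hX : Measurable X) {a b : ℝ} (hab : a ≤ b)
    (ha : μ {ω | X ω = a} = 0) :
    μ.real (X ⁻¹' Icc a b) = μ.real {ω | X ω ≤ b} - μ.real {ω | X ω ≤ a} := by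
  have hlt : μ.real {ω | X ω < a} = μ.real {ω | X ω ≤ a} := by
    have hle : {ω | X ω ≤ a} = {ω | X ω < a} ∪ {ω | X ω = a} :=
      Set.ext fun ω => le_iff_lt_or_eq (a := X ω)
    rw [hle, measureReal_congr (union_ae_eq_left_of_ae_eq_empty (ae_eq_empty.2 ha))]
  have hdiff : X ⁻¹' Icc a b = {ω | X ω ≤ b} \ {ω | X ω < a} := by
    ext ω; simp [and_comm]
  have hsub : {ω | X ω < a} ⊆ {ω | X ω ≤ b} := fun ω h => le_trans (le_of_lt h) hab
  rw [hdiff, measureReal_sdiff hsub (hX measurableSet_Iio), hlt]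

theorem cdf_remainder_low_general {Ω : Type*} [MeasureSpace Ω]
    [IsProbabilityMeasure (volume : Measure Ω)]
    (X : Ω → ℝ) (hX : Measurable X) (hX01 : ∀ ω, X ω ∈ Set.Ico (0 : ℝ) 1)
    (n : ℕ)
    (hnojump : ∀ J ∈ Omega n, volume {ω | X ω = L J} = 0 ∧
      volume {ω | X ω = L J + Ilen J} = 0) :
    ∀ x ∈ Set.Ico (0 : ℝ) gr⁻¹,
      (volume {ω | T^[n] (X ω) ≤ x}).toReal =
        ∑ J ∈ Omega n,
          ((volume {ω | X ω ≤ L J + x * gr ^ (-(n : ℤ))}).toReal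
            - (volume {ω | X ω ≤ L J}).toReal) := by
  intro x hx
  have hset : {ω | T^[n] (X ω) ≤ x} =
      ⋃ J ∈ Omega n, X ⁻¹' Icc (L J) (L J + x * gr ^ (-(n : ℤ))) := by
    ext ω
    simp only [mem_ofPred_eq, mem_iUnion₂, mem_preimage, exists_prop]
    exact T_iterate_le_iff_exists n (hX01 ω) hx.2
  have hdisj : (Omega n : Set (Fin n → Fin 2)).PairwiseDisjoint
      fun J => X ⁻¹' Icc (L J) (L J + x * gr ^ (-(n : ℤ))) :=
    fun J hJ J' hJ' hne => ((pairwiseDisjoint_Ival n hJ hJ' hne).preimage X).mono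
      (preimage_mono (Icc_subset_Ival J hx.2)) (preimage_mono (Icc_subset_Ival J' hx.2))
  simp only [← measureReal_def]
  rw [hset, measureReal_biUnion_finset hdisj fun J _ => hX measurableSet_Icc]
  refine Finset.sum_congr rfl fun J hJ => measureReal_preimage_Icc hX ?_ (hnojump J hJ).1
  exact le_add_of_nonneg_right (mul_nonneg hx.1 (zpow_pos gr_pos _).le)

theorem cdf_remainder_low {Ω : Type*} [MeasureSpace Ω]
    [IsProbabilityMeasure (volume : Measure Ω)]
    (X : Ω → ℝ) (hX : Measurable X) (hX01 : ∀ ω, X ω ∈ Set.Ico (0 : ℝ) 1)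
    (n : ℕ) (hn : 0 < n)
    (hnojump : ∀ J ∈ Omega n, volume {ω | X ω = L J} = 0 ∧
      volume {ω | X ω = L J + Ilen J} = 0) :
    ∀ x ∈ Set.Ico (0 : ℝ) gr⁻¹,
      (volume {ω | T^[n] (X ω) ≤ x}).toReal =
        ∑ J ∈ Omega n,
          ((volume {ω | X ω ≤ L J + x * gr ^ (-(n : ℤ))}).toReal
            - (volume {ω | X ω ≤ L J}).toReal) :=
  cdf_remainder_low_general X hX hX01 n hnojump
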